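/- Let N ≥ 2, fix an index i, let ξ ∈ ℝ^d, and let x_i* ∈ ℝ^d be a fixed point of f (f(x_i*) = x_i*). Set δ = max{‖ξ − x_i‖, ‖x_i* − x_i‖}. Then after one update the distance of the new point f(ξ) to the fixed point x_i* satisfies ‖f(ξ) − x_i*‖ ≤ 2 β N M² (N − 1) · exp(−β (Δ_i − 2 δ M)) · ‖ξ − x_i*‖. -/

import Mathlib

open scoped BigOperators RealInnerProductSpace

/-- softmax(v)_j = exp(v_j) / Σ_k exp(v_k). -/
noncomputable def softmax {N : ℕ} (v : Fin N → ℝ) : Fin N → ℝ :=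
  fun j => Real.exp (v j) / ∑ k, Real.exp (v k)

/-- The Hopfield update rule f(ξ) = X softmax(β Xᵀ ξ) = Σ_i softmax(β ⟪x_i, ξ⟫)_i • x_i. -/
noncomputable def hopfieldUpdate {d N : ℕ} (x : Fin N → EuclideanSpace ℝ (Fin d))
    (β : ℝ) (ξ : EuclideanSpace ℝ (Fin d)) : EuclideanSpace ℝ (Fin d) :=
  ∑ i, softmax (fun j => β * ⟪x j, ξ⟫) i • x i

/-!
Since both softmax vectors are probability vectors, `f ξ - f x* = Σ_j (p_j - q_j) • (x_j - x_i)`,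
where `p` and `q` are the softmax weights at `ξ` and `x*`. The logits at `ξ` and `x*` differ by at
most `β M ‖ξ - x*‖`, so `|p_j - q_j| ≤ 2 β M ‖ξ - x*‖ · max p_j q_j`. For `j ≠ i`, separation of
`x_i` and closeness of `ξ` and `x*` to `x_i` make both weights at most `exp (-β (Δ - 2 δ M))`.
The term `j = i` vanishes and the other `N - 1` each carry a factor `‖x_j - x_i‖ ≤ 2 M`.
-/

section Softmax

variable {N : ℕ}

lemma sum_exp_pos [NeZero N] (v : Fin N → ℝ) : 0 < ∑ k, Real.exp (v k) :=
  Finset.sum_pos (fun k _ => Real.exp_pos (v k)) Finset.univ_nonempty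

lemma softmax_nonneg (v : Fin N → ℝ) (j : Fin N) : 0 ≤ softmax v j :=
  div_nonneg (Real.exp_pos _).le (Finset.sum_nonneg fun k _ => (Real.exp_pos (v k)).le)

lemma sum_softmax [NeZero N] (v : Fin N → ℝ) : ∑ j, softmax v j = 1 := by
  simp only [softmax]
  rw [← Finset.sum_div, div_self (sum_exp_pos v).ne']

lemma softmax_le_exp_sub (v : Fin N → ℝ) (i j : Fin N) :
    softmax v j ≤ Real.exp (v j - v i) := by
  have hi : Real.exp (v i) ≤ ∑ k, Real.exp (v k) :=
    Finset.single_le_sum (fun k _ => (Real.exp_pos (v k)).le) (Finset.mem_univ i)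
  rw [Real.exp_sub]
  exact div_le_div_of_nonneg_left (Real.exp_pos _).le (Real.exp_pos _) hi

lemma exp_neg_mul_softmax_le_softmax [NeZero N] {u v : Fin N → ℝ} {c : ℝ}
    (h : ∀ k, |u k - v k| ≤ c) (j : Fin N) :
    Real.exp (-(2 * c)) * softmax u j ≤ softmax v j := by
  have hv : ∑ k, Real.exp (v k) ≤ Real.exp c * ∑ k, Real.exp (u k) := by
    rw [Finset.mul_sum]
    refine Finset.sum_le_sum fun k _ => ?_
    rw [← Real.exp_add]
    exact Real.exp_le_exp.mpr (by linarith [(abs_le.mp (h k)).1])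
  have hu : Real.exp (u j - c) ≤ Real.exp (v j) :=
    Real.exp_le_exp.mpr (by linarith [(abs_le.mp (h j)).2])
  simp only [softmax]
  rw [mul_div_assoc', div_le_div_iff₀ (sum_exp_pos u) (sum_exp_pos v)]
  calc Real.exp (-(2 * c)) * Real.exp (u j) * ∑ k, Real.exp (v k)
      ≤ Real.exp (-(2 * c)) * Real.exp (u j) * (Real.exp c * ∑ k, Real.exp (u k)) := by gcongr
    _ = Real.exp (u j - c) * ∑ k, Real.exp (u k) := by
        rw [show u j - c = -(2 * c) + u j + c by ring, Real.exp_add, Real.exp_add]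
        ring
    _ ≤ Real.exp (v j) * ∑ k, Real.exp (u k) := by gcongr

lemma abs_softmax_sub_softmax_le [NeZero N] {u v : Fin N → ℝ} {c : ℝ}
    (h : ∀ k, |u k - v k| ≤ c) (j : Fin N) :
    |softmax u j - softmax v j| ≤ 2 * c * max (softmax u j) (softmax v j) := by
  have huv := exp_neg_mul_softmax_le_softmax h j
  have hvu := exp_neg_mul_softmax_le_softmax (fun k => abs_sub_comm (u k) (v k) ▸ h k) j
  have hexp : 1 - Real.exp (-(2 * c)) ≤ 2 * c := by linarith [Real.add_one_le_exp (-(2 * c))]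
  have hp := softmax_nonneg u j
  have hq := softmax_nonneg v j
  rcases le_total (softmax u j) (softmax v j) with hle | hle
  · rw [abs_of_nonpos (by linarith), max_eq_right hle]
    nlinarith
  · rw [abs_of_nonneg (by linarith), max_eq_left hle]
    nlinarith

end Softmax

section Geometry

variable {E : Type*} [NormedAddCommGroup E] [InnerProductSpace ℝ E]

lemma inner_sub_inner_le_of_separation {a b y : E} {M Δ δ : ℝ} (ha : ‖a‖ ≤ M) (hb : ‖b‖ ≤ M)
    (hΔ : Δ ≤ ⟪a, a⟫ - ⟪a, b⟫) (hy : ‖y - a‖ ≤ δ) :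
    ⟪b, y⟫ - ⟪a, y⟫ ≤ -(Δ - 2 * δ * M) := by
  have hsplit : ⟪b, y⟫ - ⟪a, y⟫ = (⟪a, b⟫ - ⟪a, a⟫) + ⟪b - a, y - a⟫ := by
    simp only [inner_sub_left, inner_sub_right, real_inner_comm a b]
    ring
  have hcross : ⟪b - a, y - a⟫ ≤ 2 * δ * M :=
    calc ⟪b - a, y - a⟫ ≤ ‖b - a‖ * ‖y - a‖ := real_inner_le_norm _ _
      _ ≤ (M + M) * δ :=
          mul_le_mul (norm_sub_le_of_le hb ha) hy (norm_nonneg _) (by linarith [norm_nonneg a])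
      _ = 2 * δ * M := by ring
  linarith

lemma abs_mul_inner_sub_mul_inner_le {a ξ η : E} {β M : ℝ} (hβ : 0 ≤ β) (ha : ‖a‖ ≤ M) :
    |β * ⟪a, ξ⟫ - β * ⟪a, η⟫| ≤ β * M * ‖ξ - η‖ := by
  rw [← mul_sub, ← inner_sub_right, abs_mul, abs_of_nonneg hβ, mul_assoc]
  gcongr
  exact (abs_real_inner_le_norm _ _).trans (by gcongr)

variable {ι : Type*} [Fintype ι]

lemma sum_smul_sub_sum_smul_of_sum_eq_one {p q : ι → ℝ} (hp : ∑ j, p j = 1) (hq : ∑ j, q j = 1)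
    (x : ι → E) (i : ι) :
    ∑ j, p j • x j - ∑ j, q j • x j = ∑ j, (p j - q j) • (x j - x i) := by
  simp only [smul_sub, sub_smul, Finset.sum_sub_distrib, ← Finset.sum_smul, hp, hq]
  abel

lemma norm_sum_smul_sub_le [DecidableEq ι] {x : ι → E} {c : ι → ℝ} {M B : ℝ} (i : ι)
    (hx : ∀ k, ‖x k‖ ≤ M) (hc : ∀ j ≠ i, |c j| ≤ B) :
    ‖∑ j, c j • (x j - x i)‖ ≤ ((Fintype.card ι : ℝ) - 1) * (B * (2 * M)) := by
  have hterm : ∀ j ∈ Finset.univ.erase i, ‖c j • (x j - x i)‖ ≤ B * (2 * M) := by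
    intro j hj
    rw [norm_smul, Real.norm_eq_abs, two_mul]
    exact mul_le_mul (hc j (Finset.ne_of_mem_erase hj)) (norm_sub_le_of_le (hx j) (hx i))
      (norm_nonneg _) ((abs_nonneg _).trans (hc j (Finset.ne_of_mem_erase hj)))
  have hcard : ((Finset.univ.erase i).card : ℝ) = (Fintype.card ι : ℝ) - 1 := by
    rw [Finset.card_erase_of_mem (Finset.mem_univ i), Finset.card_univ,
      Nat.cast_sub (Fintype.card_pos_iff.mpr ⟨i⟩), Nat.cast_one]
  rw [← Finset.sum_erase _ (by rw [sub_self, smul_zero]), ← hcard, ← nsmul_eq_mul]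
  exact (norm_sum_le _ _).trans (Finset.sum_le_card_nsmul _ _ _ hterm)

end Geometry

lemma hopfieldUpdate_sub_hopfieldUpdate {d N : ℕ} [NeZero N]
    (x : Fin N → EuclideanSpace ℝ (Fin d)) (β : ℝ) (ξ η : EuclideanSpace ℝ (Fin d)) (i : Fin N) :
    hopfieldUpdate x β ξ - hopfieldUpdate x β η = ∑ j,
      (softmax (fun k => β * ⟪x k, ξ⟫) j - softmax (fun k => β * ⟪x k, η⟫) j) • (x j - x i) :=
  sum_smul_sub_sum_smul_of_sum_eq_one (sum_softmax _) (sum_softmax _) x i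

lemma softmax_inner_le_exp_of_separation {E : Type*} [NormedAddCommGroup E]
    [InnerProductSpace ℝ E] {N : ℕ} {x : Fin N → E} {β M Δ δ : ℝ} (hβ : 0 ≤ β) {i j : Fin N}
    (hi : ‖x i‖ ≤ M) (hj : ‖x j‖ ≤ M) (hΔ : Δ ≤ ⟪x i, x i⟫ - ⟪x i, x j⟫) {y : E}
    (hy : ‖y - x i‖ ≤ δ) :
    softmax (fun k => β * ⟪x k, y⟫) j ≤ Real.exp (-β * (Δ - 2 * δ * M)) := by
  refine (softmax_le_exp_sub _ i j).trans (Real.exp_le_exp.mpr ?_)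
  have := mul_le_mul_of_nonneg_left (inner_sub_inner_le_of_separation hi hj hΔ hy) hβ
  linarith

lemma four_mul_sub_one_le_two_mul_mul_sub_one (N : ℕ) [NeZero N] :
    4 * ((N : ℝ) - 1) ≤ 2 * N * ((N : ℝ) - 1) := by
  rcases Nat.lt_or_ge N 2 with hN | hN
  · obtain rfl : N = 1 := by have := NeZero.ne N; omega
    norm_num
  · have : (2 : ℝ) ≤ N := by exact_mod_cast hN
    nlinarith

theorem one_update_contraction_general
    {d N : ℕ} (x : Fin N → EuclideanSpace ℝ (Fin d)) (β M Δ : ℝ)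
    (hβ : 0 < β)
    (hM : IsGreatest (Set.range fun i => ‖x i‖) M)
    (i : Fin N)
    (hΔ : IsLeast {v : ℝ | ∃ j, j ≠ i ∧ v = ⟪x i, x i⟫ - ⟪x i, x j⟫} Δ)
    (ξ xstar : EuclideanSpace ℝ (Fin d))
    (hfix : hopfieldUpdate x β xstar = xstar) :
    ‖hopfieldUpdate x β ξ - xstar‖
      ≤ 2 * β * N * M ^ 2 * ((N : ℝ) - 1) *
          Real.exp (-β * (Δ - 2 * max ‖ξ - x i‖ ‖xstar - x i‖ * M)) *
          ‖ξ - xstar‖ := by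
  have : NeZero N := ⟨i.pos.ne'⟩
  set r := ‖ξ - xstar‖
  set ε := Real.exp (-β * (Δ - 2 * max ‖ξ - x i‖ ‖xstar - x i‖ * M))
  have hxM : ∀ k, ‖x k‖ ≤ M := fun k => hM.2 ⟨k, rfl⟩
  have hM0 : 0 ≤ M := (norm_nonneg _).trans (hxM i)
  have hlogit : ∀ k, |β * ⟪x k, ξ⟫ - β * ⟪x k, xstar⟫| ≤ β * M * r := fun k =>
    abs_mul_inner_sub_mul_inner_le hβ.le (hxM k)
  have hsep : ∀ y, ‖y - x i‖ ≤ max ‖ξ - x i‖ ‖xstar - x i‖ → ∀ j ≠ i,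
      softmax (fun k => β * ⟪x k, y⟫) j ≤ ε := fun y hy j hj =>
    softmax_inner_le_exp_of_separation hβ.le (hxM i) (hxM j) (hΔ.2 ⟨j, hj, rfl⟩) hy
  have hcoef : ∀ j ≠ i, |softmax (fun k => β * ⟪x k, ξ⟫) j
      - softmax (fun k => β * ⟪x k, xstar⟫) j| ≤ 2 * (β * M * r) * ε := fun j hj =>
    (abs_softmax_sub_softmax_le hlogit j).trans <| by
      gcongr
      exact max_le (hsep ξ (le_max_left _ _) j hj) (hsep xstar (le_max_right _ _) j hj)
  calc ‖hopfieldUpdate x β ξ - xstar‖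
      = ‖∑ j, (softmax (fun k => β * ⟪x k, ξ⟫) j
          - softmax (fun k => β * ⟪x k, xstar⟫) j) • (x j - x i)‖ := by
        conv_lhs => rw [← hfix]
        rw [hopfieldUpdate_sub_hopfieldUpdate x β ξ xstar i]
    _ ≤ ((N : ℝ) - 1) * (2 * (β * M * r) * ε * (2 * M)) := by
        simpa using norm_sum_smul_sub_le i hxM hcoef
    _ = β * M ^ 2 * ε * r * (4 * ((N : ℝ) - 1)) := by ring
    _ ≤ β * M ^ 2 * ε * r * (2 * N * ((N : ℝ) - 1)) :=
        mul_le_mul_of_nonneg_left (four_mul_sub_one_le_two_mul_mul_sub_one N) (by positivity)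
    _ = 2 * β * N * M ^ 2 * ((N : ℝ) - 1) * ε * r := by ring

/-- For N ≥ 2, index i, ξ, and a fixed point x_i* of f, with
δ = max{‖ξ − x_i‖, ‖x_i* − x_i‖}, after one update
‖f(ξ) − x_i*‖ ≤ 2 β N M² (N − 1) · exp(−β (Δ_i − 2 δ M)) · ‖ξ − x_i*‖. -/
theorem one_update_contraction
    {d N : ℕ} (hN : 2 ≤ N) (x : Fin N → EuclideanSpace ℝ (Fin d)) (β M Δ : ℝ)
    (hβ : 0 < β)
    (hM : IsGreatest (Set.range fun i => ‖x i‖) M)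
    (i : Fin N)
    (hΔ : IsLeast {v : ℝ | ∃ j, j ≠ i ∧ v = ⟪x i, x i⟫ - ⟪x i, x j⟫} Δ)
    (ξ xstar : EuclideanSpace ℝ (Fin d))
    (hfix : hopfieldUpdate x β xstar = xstar) :
    ‖hopfieldUpdate x β ξ - xstar‖
      ≤ 2 * β * N * M ^ 2 * ((N : ℝ) - 1) *
          Real.exp (-β * (Δ - 2 * max ‖ξ - x i‖ ‖xstar - x i‖ * M)) *
          ‖ξ - xstar‖ :=
  one_update_contraction_general x β M Δ hβ hM i hΔ ξ xstar hfix
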